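/- Let F : ℝ^n → ℝ^m be continuously differentiable, B a symmetric positive definite n×n real matrix, and suppose each F_i is L_i-smooth and μ_i-strongly convex relative to ‖·‖_B with 0 < δ_i ≤ μ_i ≤ L_i. Let x ∈ ℝ^n, let α_1,…,α_m satisfy μ_i ≤ α_i ≤ L_i, let d be the unique minimizer over ℝ^n of d ↦ max_{i∈{1,…,m}} ⟨∇F_i(x), d⟩/α_i + (1/2)‖d‖_B², let σ ∈ (0, 1/2] and γ ∈ (0,1), and suppose t > 0 satisfies the Armijo condition at x in direction d and t ≥ 2γ(1−σ)·min_{i∈{1,…,m}} μ_i/L_i. Then, with u_0^δ(z) := sup_{y∈ℝ^n} min_{i∈{1,…,m}} (F_i(z) − F_i(y))/δ_i, one has u_0^δ(x + t d) ≤ (1 − 2γσ(1−σ)·min_{i∈{1,…,m}} μ_i δ_i²/L_i³) · u_0^δ(x). -/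

import Mathlib

/-!
Comparing `d` with `0` in its subproblem gives `⟪∇F_i(x), d⟫ ≤ -α_i ‖d‖_B² / 2`, so along an
Armijo step every `F_i`, and hence `u₀^δ`, drops by at least `σ t ‖d‖_B² / 2`. Conversely the
first-order optimality condition of the subproblem, `-⟪B d, w⟫ ≤ max_i ⟪∇F_i(x), w⟫ / α_i`,
together with strong convexity and Young's inequality for `⟪·, B ·⟫`, bounds `u₀^δ(x)` by
`‖d‖_B² / (2 min_i μ_i δ_i / L_i²)`. The lower bound on `t` and the elementary inequality
`min_i μ_i δ_i² / L_i³ ≤ (min_i μ_i / L_i) (min_i μ_i δ_i / L_i²)` turn the decrease into the rate.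
-/

open scoped RealInnerProductSpace

/-- Maximum of a function over the (nonempty) finite index type `Fin m`. -/
noncomputable def fmax {m : ℕ} [NeZero m] (f : Fin m → ℝ) : ℝ :=
  Finset.univ.sup' Finset.univ_nonempty f

/-- Minimum of a function over the (nonempty) finite index type `Fin m`. -/
noncomputable def fmin {m : ℕ} [NeZero m] (f : Fin m → ℝ) : ℝ :=
  Finset.univ.inf' Finset.univ_nonempty f

open Filter Topology

lemma le_fmax {m : ℕ} [NeZero m] (f : Fin m → ℝ) (i : Fin m) : f i ≤ fmax f :=
  Finset.le_sup' f (Finset.mem_univ i)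

lemma fmin_le {m : ℕ} [NeZero m] (f : Fin m → ℝ) (i : Fin m) : fmin f ≤ f i :=
  Finset.inf'_le f (Finset.mem_univ i)

lemma fmax_le {m : ℕ} [NeZero m] {f : Fin m → ℝ} {a : ℝ} (h : ∀ i, f i ≤ a) : fmax f ≤ a :=
  Finset.sup'_le _ f (fun i _ => h i)

lemma fmax_const {m : ℕ} [NeZero m] (c : ℝ) : fmax (fun _ : Fin m => c) = c :=
  Finset.sup'_const _ c

lemma fmin_const {m : ℕ} [NeZero m] (c : ℝ) : fmin (fun _ : Fin m => c) = c :=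
  Finset.inf'_const _ c

lemma exists_fmax_eq {m : ℕ} [NeZero m] (f : Fin m → ℝ) : ∃ i, fmax f = f i := by
  obtain ⟨i, -, h⟩ := Finset.exists_mem_eq_sup' Finset.univ_nonempty f
  exact ⟨i, h⟩

lemma exists_fmin_eq {m : ℕ} [NeZero m] (f : Fin m → ℝ) : ∃ i, fmin f = f i := by
  obtain ⟨i, -, h⟩ := Finset.exists_mem_eq_inf' Finset.univ_nonempty f
  exact ⟨i, h⟩

lemma fmin_pos {m : ℕ} [NeZero m] {f : Fin m → ℝ} (h : ∀ i, 0 < f i) : 0 < fmin f := by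
  obtain ⟨i, hi⟩ := exists_fmin_eq f
  exact hi ▸ h i

/-- Choosing `k` minimizing `a k * b k` and `p` minimizing `a p`, the index `k` works when
`b k ≤ a p`, and otherwise `p` does, because then `b p ≤ a p < b k` and `b p ≤ a p ≤ a k`. -/
lemma fmin_mul_sq_le_fmin_mul_fmin {m : ℕ} [NeZero m] {a b : Fin m → ℝ}
    (hb : ∀ i, 0 ≤ b i) (hba : ∀ i, b i ≤ a i) :
    fmin (fun i => a i * b i ^ 2) ≤ fmin a * fmin (fun i => a i * b i) := by
  obtain ⟨k, hk⟩ := exists_fmin_eq fun i => a i * b i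
  obtain ⟨p, hp⟩ := exists_fmin_eq a
  rw [hk, hp]
  have hk_le := fmin_le (fun i => a i * b i ^ 2) k
  have hp_le := fmin_le (fun i => a i * b i ^ 2) p
  have hpk : a p ≤ a k := hp ▸ fmin_le a k
  have hak : 0 ≤ a k * b k := mul_nonneg ((hb k).trans (hba k)) (hb k)
  rcases le_or_gt (b k) (a p) with hcase | hcase
  · nlinarith [mul_le_mul_of_nonneg_left hcase hak]
  · have hsq : b p * b p ≤ a k * b k :=
      mul_le_mul ((hba p).trans hpk) ((hba p).trans hcase.le) (hb p) ((hb k).trans (hba k))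
    nlinarith [mul_le_mul_of_nonneg_left hsq ((hb p).trans (hba p))]

lemma fmin_mul_sq_div_pow_three_le {m : ℕ} [NeZero m] {L μ δ : Fin m → ℝ}
    (hδ : ∀ i, 0 < δ i) (hδμ : ∀ i, δ i ≤ μ i) (hL : ∀ i, 0 < L i) :
    fmin (fun i => μ i * δ i ^ 2 / L i ^ 3) ≤
      fmin (fun i => μ i / L i) * fmin (fun i => μ i / L i * (δ i / L i)) := by
  convert fmin_mul_sq_le_fmin_mul_fmin (a := fun i => μ i / L i) (b := fun i => δ i / L i)
    (fun i => (div_pos (hδ i) (hL i)).le)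
    (fun i => div_le_div_of_nonneg_right (hδμ i) (hL i).le) using 2 with i
  field_simp

lemma nonneg_of_forall_pos_nonneg_add_mul {a b : ℝ} (h : ∀ s > 0, 0 ≤ a + s * b) : 0 ≤ a := by
  have hcont : Continuous fun s : ℝ => a + s * b := by fun_prop
  have hlim : Tendsto (fun s : ℝ => a + s * b) (𝓝[>] 0) (𝓝 a) := by
    simpa using (hcont.tendsto 0).mono_left nhdsWithin_le_nhds
  exact ge_of_tendsto hlim (eventually_nhdsWithin_of_forall h)

section QuadraticForm

variable {E : Type*} [NormedAddCommGroup E] [InnerProductSpace ℝ E] {B : E →ₗ[ℝ] E}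

lemma LinearMap.IsSymmetric.inner_smul_add_smul_map_smul_add_smul (hB : B.IsSymmetric)
    (a b : ℝ) (v w : E) :
    ⟪a • v + b • w, B (a • v + b • w)⟫ =
      a ^ 2 * ⟪v, B v⟫ + 2 * a * b * ⟪B v, w⟫ + b ^ 2 * ⟪w, B w⟫ := by
  have hvw : ⟪v, B w⟫ = ⟪B v, w⟫ := (hB v w).symm
  have hwv : ⟪w, B v⟫ = ⟪B v, w⟫ := real_inner_comm _ _
  simp only [map_add, map_smul, inner_add_left, inner_add_right, real_inner_smul_left,
    real_inner_smul_right, hvw, hwv]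
  ring

lemma LinearMap.IsPositive.two_mul_mul_inner_map_le (hB : B.IsPositive) (a b : ℝ) (v w : E) :
    2 * a * b * ⟪B v, w⟫ ≤ a ^ 2 * ⟪v, B v⟫ + b ^ 2 * ⟪w, B w⟫ := by
  have := hB.inner_nonneg_right (a • v + (-b) • w)
  rw [hB.isSymmetric.inner_smul_add_smul_map_smul_add_smul] at this
  nlinarith

lemma LinearMap.IsSymmetric.isPositive_of_inner_map_self_pos (hB : B.IsSymmetric)
    (hpos : ∀ v, v ≠ 0 → 0 < ⟪v, B v⟫) : B.IsPositive := by
  refine B.isPositive_iff.mpr ⟨hB, fun v => ?_⟩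
  rw [hB]
  rcases eq_or_ne v 0 with rfl | hv
  · simp
  · exact (hpos v hv).le

end QuadraticForm

section Descent

variable {m : ℕ} [NeZero m] {E : Type*} [NormedAddCommGroup E] [InnerProductSpace ℝ E]
  {B : E →ₗ[ℝ] E}

/-- The objective of the direction-finding subproblem; `g i` plays the role of `∇F_i(x)`. -/
noncomputable def descentObjective (g : Fin m → E) (α : Fin m → ℝ) (B : E →ₗ[ℝ] E) (e : E) : ℝ :=
  fmax (fun i => ⟪g i, e⟫ / α i) + ⟪e, B e⟫ / 2

variable {g : Fin m → E} {α : Fin m → ℝ} {d : E}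

lemma inner_le_of_isMin_descentObjective (hα : ∀ i, 0 < α i)
    (hd : ∀ e, descentObjective g α B d ≤ descentObjective g α B e) (i : Fin m) :
    ⟪g i, d⟫ ≤ -(α i / 2 * ⟪d, B d⟫) := by
  have h0 := hd 0
  simp only [descentObjective, inner_zero_right, zero_div, fmax_const, map_zero, add_zero] at h0
  have hi := le_fmax (fun j => ⟪g j, d⟫ / α j) i
  have : ⟪g i, d⟫ / α i ≤ -(⟪d, B d⟫ / 2) := by linarith
  rw [div_le_iff₀ (hα i)] at this
  linarith

/-- First-order optimality condition of the subproblem, obtained by comparing `d` with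
`d + s • w` and letting `s → 0⁺`. -/
lemma neg_inner_map_le_fmax_of_isMin_descentObjective (hB : B.IsSymmetric)
    (hd : ∀ e, descentObjective g α B d ≤ descentObjective g α B e) (w : E) :
    -⟪B d, w⟫ ≤ fmax fun i => ⟪g i, w⟫ / α i := by
  set C := fmax fun i => ⟪g i, w⟫ / α i
  suffices 0 ≤ C + ⟪B d, w⟫ by linarith
  refine nonneg_of_forall_pos_nonneg_add_mul (b := ⟪w, B w⟫ / 2) fun s hs => ?_
  have hmin := hd (d + s • w)
  have hexp : ⟪d + s • w, B (d + s • w)⟫ = ⟪d, B d⟫ + 2 * s * ⟪B d, w⟫ + s ^ 2 * ⟪w, B w⟫ := by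
    simpa using hB.inner_smul_add_smul_map_smul_add_smul 1 s d w
  have hmax : fmax (fun i => ⟪g i, d + s • w⟫ / α i) ≤
      fmax (fun i => ⟪g i, d⟫ / α i) + s * C := by
    refine fmax_le fun i => ?_
    have hsplit : ⟪g i, d + s • w⟫ / α i = ⟪g i, d⟫ / α i + s * (⟪g i, w⟫ / α i) := by
      rw [inner_add_right, real_inner_smul_right, add_div, mul_div_assoc]
    rw [hsplit]
    gcongr
    · exact le_fmax (fun j => ⟪g j, d⟫ / α j) i
    · exact le_fmax (fun j => ⟪g j, w⟫ / α j) i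
  simp only [descentObjective, hexp] at hmin
  nlinarith

lemma sub_le_of_strongConvex_of_neg_inner_le (hB : B.IsPositive) {f : E → ℝ} {x y v : E}
    {μ a : ℝ} (hμ : 0 < μ)
    (hsc : f x + ⟪v, y - x⟫ + μ / 2 * ⟪y - x, B (y - x)⟫ ≤ f y)
    (hv : -⟪v, y - x⟫ ≤ a * ⟪B d, y - x⟫) :
    f x - f y ≤ a ^ 2 / (2 * μ) * ⟪d, B d⟫ := by
  have hyoung := hB.two_mul_mul_inner_map_le a μ d (y - x)
  rw [div_mul_eq_mul_div, le_div_iff₀ (by positivity)]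
  nlinarith

lemma fmin_sub_div_le_of_isMin_descentObjective (hB : B.IsPositive)
    (hd : ∀ e, descentObjective g α B d ≤ descentObjective g α B e)
    {F : Fin m → E → ℝ} {x : E} {L μ δ : Fin m → ℝ}
    (hsc : ∀ i y, F i x + ⟪g i, y - x⟫ + μ i / 2 * ⟪y - x, B (y - x)⟫ ≤ F i y)
    (hδ : ∀ i, 0 < δ i) (hμ : ∀ i, 0 < μ i) (hα : ∀ i, μ i ≤ α i ∧ α i ≤ L i) (y : E) :
    fmin (fun i => (F i x - F i y) / δ i) ≤
      ⟪d, B d⟫ / (2 * fmin fun i => μ i / L i * (δ i / L i)) := by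
  obtain ⟨k, hk⟩ := exists_fmax_eq fun i => ⟪g i, y - x⟫ / α i
  have hαk : 0 < α k := (hμ k).trans_le (hα k).1
  have hLk : 0 < L k := hαk.trans_le (hα k).2
  have hv : -⟪g k, y - x⟫ ≤ α k * ⟪B d, y - x⟫ := by
    have := neg_inner_map_le_fmax_of_isMin_descentObjective hB.isSymmetric hd (y - x)
    rw [hk, le_div_iff₀ hαk] at this
    linarith
  have hdec := sub_le_of_strongConvex_of_neg_inner_le hB (hμ k) (hsc k y) hv
  have hD := hB.inner_nonneg_right d
  have hqk := fmin_le (fun i => μ i / L i * (δ i / L i)) k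
  have hq : 0 < fmin fun i => μ i / L i * (δ i / L i) := fmin_pos fun i => by
    have := hμ i; have := hδ i; have := (hμ i).trans_le ((hα i).1.trans (hα i).2)
    positivity
  have := hδ k
  have := hμ k
  calc fmin (fun i => (F i x - F i y) / δ i)
      ≤ (F k x - F k y) / δ k := fmin_le (fun i => (F i x - F i y) / δ i) k
    _ ≤ α k ^ 2 / (2 * μ k) * ⟪d, B d⟫ / δ k := by gcongr
    _ ≤ L k ^ 2 / (2 * μ k) * ⟪d, B d⟫ / δ k := by gcongr; exact (hα k).2
    _ = ⟪d, B d⟫ / (2 * (μ k / L k * (δ k / L k))) := by field_simp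
    _ ≤ ⟪d, B d⟫ / (2 * fmin fun i => μ i / L i * (δ i / L i)) := by gcongr

end Descent

section Merit

variable {m : ℕ} [NeZero m] {E : Type*}

/-- The merit function `u₀^δ`. -/
noncomputable def merit (F : Fin m → E → ℝ) (δ : Fin m → ℝ) (z : E) : ℝ :=
  ⨆ y, fmin fun i => (F i z - F i y) / δ i

variable {F : Fin m → E → ℝ} {δ : Fin m → ℝ}

lemma le_merit {z : E}
    (hbdd : BddAbove (Set.range fun y => fmin fun i => (F i z - F i y) / δ i)) (y : E) :
    fmin (fun i => (F i z - F i y) / δ i) ≤ merit F δ z :=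
  le_ciSup hbdd y

lemma merit_le [Nonempty E] {z : E} {c : ℝ}
    (h : ∀ y, fmin (fun i => (F i z - F i y) / δ i) ≤ c) :
    merit F δ z ≤ c :=
  ciSup_le h

lemma merit_nonneg {z : E}
    (hbdd : BddAbove (Set.range fun y => fmin fun i => (F i z - F i y) / δ i)) :
    0 ≤ merit F δ z := by
  simpa [fmin_const] using le_merit hbdd z

lemma merit_le_merit_sub [Nonempty E] {z z' : E} {c : ℝ}
    (hbdd : BddAbove (Set.range fun y => fmin fun i => (F i z - F i y) / δ i))
    (hδ : ∀ i, 0 < δ i) (h : ∀ i, F i z' - F i z ≤ -(c * δ i)) :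
    merit F δ z' ≤ merit F δ z - c := by
  refine merit_le fun y => ?_
  obtain ⟨k, hk⟩ := exists_fmin_eq fun i => (F i z - F i y) / δ i
  have hstep : (F k z' - F k z) / δ k ≤ -c := by
    rw [div_le_iff₀ (hδ k)]
    linarith [h k]
  calc fmin (fun i => (F i z' - F i y) / δ i)
      ≤ (F k z' - F k y) / δ k := fmin_le (fun i => (F i z' - F i y) / δ i) k
    _ = (F k z - F k y) / δ k + (F k z' - F k z) / δ k := by rw [← add_div]; ring_nf
    _ ≤ merit F δ z - c := by
        rw [← hk]
        linarith [le_merit hbdd y]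

end Merit

lemma merit_le_merit_sub_of_armijo {m : ℕ} [NeZero m] {E : Type*} [NormedAddCommGroup E]
    [InnerProductSpace ℝ E] {B : E →ₗ[ℝ] E} {g : Fin m → E} {α : Fin m → ℝ} {d : E}
    (hB : B.IsPositive) (hd : ∀ e, descentObjective g α B d ≤ descentObjective g α B e)
    {F : Fin m → E → ℝ} {δ : Fin m → ℝ} {x z : E} {σ t : ℝ}
    (hbdd : BddAbove (Set.range fun y => fmin fun i => (F i x - F i y) / δ i))
    (hδ : ∀ i, 0 < δ i) (hδα : ∀ i, δ i ≤ α i) (hst : 0 ≤ σ * t)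
    (harmijo : ∀ i, F i z - F i x ≤ σ * t * ⟪g i, d⟫) :
    merit F δ z ≤ merit F δ x - σ * t * ⟪d, B d⟫ / 2 := by
  refine merit_le_merit_sub hbdd hδ fun i => ?_
  have hdir := inner_le_of_isMin_descentObjective (fun i => (hδ i).trans_le (hδα i)) hd i
  nlinarith [harmijo i, mul_le_mul_of_nonneg_left hdir hst,
    mul_nonneg (mul_nonneg hst (hB.inner_nonneg_right d)) (sub_nonneg.2 (hδα i))]

theorem stmt16_general {n m : ℕ} [NeZero m] (F : Fin m → EuclideanSpace ℝ (Fin n) → ℝ)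
    (B : EuclideanSpace ℝ (Fin n) →ₗ[ℝ] EuclideanSpace ℝ (Fin n))
    (hsym : ∀ u v : EuclideanSpace ℝ (Fin n), ⟪B u, v⟫ = ⟪u, B v⟫)
    (hposdef : ∀ u : EuclideanSpace ℝ (Fin n), u ≠ 0 → 0 < ⟪u, B u⟫)
    (L μ δ : Fin m → ℝ) (hδ : ∀ i, 0 < δ i) (hδμ : ∀ i, δ i ≤ μ i) (hμL : ∀ i, μ i ≤ L i)
    (hsc : ∀ i, ∀ y z : EuclideanSpace ℝ (Fin n),
      F i y + ⟪gradient (F i) y, z - y⟫ + μ i / 2 * ⟪z - y, B (z - y)⟫ ≤ F i z)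
    (x : EuclideanSpace ℝ (Fin n)) (α : Fin m → ℝ) (hα : ∀ i, μ i ≤ α i ∧ α i ≤ L i)
    (d : EuclideanSpace ℝ (Fin n))
    (hdmin : ∀ e : EuclideanSpace ℝ (Fin n),
      (fmax fun i => ⟪gradient (F i) x, d⟫ / α i) + ⟪d, B d⟫ / 2 ≤
        (fmax fun i => ⟪gradient (F i) x, e⟫ / α i) + ⟪e, B e⟫ / 2)
    (σ γ : ℝ) (hσ : σ ∈ Set.Ioc (0 : ℝ) (1 / 2)) (hγ : γ ∈ Set.Ioo (0 : ℝ) 1)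
    (t : ℝ) (ht : 0 < t)
    (harmijo : ∀ i, F i (x + t • d) - F i x ≤ σ * t * ⟪gradient (F i) x, d⟫)
    (htlow : 2 * γ * (1 - σ) * fmin (fun i => μ i / L i) ≤ t)
    (u : EuclideanSpace ℝ (Fin n) → ℝ)
    (hu : ∀ z, u z = ⨆ y : EuclideanSpace ℝ (Fin n), fmin fun i => (F i z - F i y) / δ i) :
    u (x + t • d) ≤
      (1 - 2 * γ * σ * (1 - σ) * fmin fun i => μ i * δ i ^ 2 / L i ^ 3) * u x := by
  obtain rfl : u = merit F δ := funext hu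
  have hμ i : 0 < μ i := (hδ i).trans_le (hδμ i)
  have hL i : 0 < L i := (hμ i).trans_le (hμL i)
  have hB := LinearMap.IsSymmetric.isPositive_of_inner_map_self_pos hsym hposdef
  have hbound := fmin_sub_div_le_of_isMin_descentObjective hB hdmin (fun i y => hsc i x y) hδ hμ hα
  have hbdd : BddAbove (Set.range fun y => fmin fun i => (F i x - F i y) / δ i) :=
    ⟨_, Set.forall_mem_range.2 hbound⟩
  have hst : 0 ≤ σ * t := mul_nonneg hσ.1.le ht.le
  have hdec := merit_le_merit_sub_of_armijo hB hdmin hbdd hδ (fun i => (hδμ i).trans (hα i).1)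
    hst harmijo
  set q := fmin fun i => μ i / L i * (δ i / L i)
  have hq : 0 < q := fmin_pos fun i => by have := hμ i; have := hδ i; have := hL i; positivity
  have hqu : q * merit F δ x ≤ ⟪d, B d⟫ / 2 := by
    have := merit_le hbound
    rw [le_div_iff₀ (by positivity)] at this
    linarith
  have hconst := fmin_mul_sq_div_pow_three_le hδ hδμ hL
  have hux := merit_nonneg hbdd
  have hrate : 0 ≤ 2 * γ * σ * (1 - σ) * merit F δ x := by
    have := hσ.1; have := hγ.1; have : 0 ≤ 1 - σ := by linarith [hσ.2]
    positivity
  calc merit F δ (x + t • d)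
      ≤ merit F δ x - σ * t * (q * merit F δ x) := by
        nlinarith [mul_le_mul_of_nonneg_left hqu hst]
    _ ≤ merit F δ x - σ * (2 * γ * (1 - σ) * fmin (fun i => μ i / L i)) * (q * merit F δ x) := by
        have := hσ.1
        gcongr
    _ ≤ _ := by nlinarith [mul_le_mul_of_nonneg_left hconst hrate]

/-- One-step linear decrease of the merit function
`u₀^δ(z) = sup_y min_i (F_i(z) − F_i(y))/δ_i` along the Barzilai–Borwein descent
direction with variable metric:
`u₀^δ(x + t d) ≤ (1 − 2γσ(1−σ)·min_i μ_i δ_i²/L_i³) · u₀^δ(x)`. -/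
theorem stmt16 {n m : ℕ} [NeZero m] (F : Fin m → EuclideanSpace ℝ (Fin n) → ℝ)
    (hF : ∀ i, ContDiff ℝ 1 (F i))
    (B : EuclideanSpace ℝ (Fin n) →ₗ[ℝ] EuclideanSpace ℝ (Fin n))
    (hsym : ∀ u v : EuclideanSpace ℝ (Fin n), ⟪B u, v⟫ = ⟪u, B v⟫)
    (hposdef : ∀ u : EuclideanSpace ℝ (Fin n), u ≠ 0 → 0 < ⟪u, B u⟫)
    (L μ δ : Fin m → ℝ) (hδ : ∀ i, 0 < δ i) (hδμ : ∀ i, δ i ≤ μ i) (hμL : ∀ i, μ i ≤ L i)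
    (hsmooth : ∀ i, ∀ y z : EuclideanSpace ℝ (Fin n),
      F i z ≤ F i y + ⟪gradient (F i) y, z - y⟫ + L i / 2 * ⟪z - y, B (z - y)⟫)
    (hsc : ∀ i, ∀ y z : EuclideanSpace ℝ (Fin n),
      F i y + ⟪gradient (F i) y, z - y⟫ + μ i / 2 * ⟪z - y, B (z - y)⟫ ≤ F i z)
    (x : EuclideanSpace ℝ (Fin n)) (α : Fin m → ℝ) (hα : ∀ i, μ i ≤ α i ∧ α i ≤ L i)
    (d : EuclideanSpace ℝ (Fin n))
    (hdmin : ∀ e : EuclideanSpace ℝ (Fin n),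
      (fmax fun i => ⟪gradient (F i) x, d⟫ / α i) + ⟪d, B d⟫ / 2 ≤
        (fmax fun i => ⟪gradient (F i) x, e⟫ / α i) + ⟪e, B e⟫ / 2)
    (σ γ : ℝ) (hσ : σ ∈ Set.Ioc (0 : ℝ) (1 / 2)) (hγ : γ ∈ Set.Ioo (0 : ℝ) 1)
    (t : ℝ) (ht : 0 < t)
    (harmijo : ∀ i, F i (x + t • d) - F i x ≤ σ * t * ⟪gradient (F i) x, d⟫)
    (htlow : 2 * γ * (1 - σ) * fmin (fun i => μ i / L i) ≤ t)
    (u : EuclideanSpace ℝ (Fin n) → ℝ)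
    (hu : ∀ z, u z = ⨆ y : EuclideanSpace ℝ (Fin n), fmin fun i => (F i z - F i y) / δ i) :
    u (x + t • d) ≤
      (1 - 2 * γ * σ * (1 - σ) * fmin fun i => μ i * δ i ^ 2 / L i ^ 3) * u x :=
  stmt16_general F B hsym hposdef L μ δ hδ hδμ hμL hsc x α hα d hdmin σ γ hσ hγ t ht harmijo htlow u
    hu
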